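/- arXiv:2003.07613 — 7 statements merged into one kernel-verified Lean document; each statement's English description precedes it below -/
import Mathlib

section
/- For every T ∈ (0,4), γ ∈ (−1,1], and u ∈ (0,1), the inequality √((1+γu)² − γTu)/√((1−u)² + Tu) ≤ ((1+γ)/2)·(1+u)/√((1−u)² + Tu) + (1−γ)/2 holds. -/
/-!
Put `a = (1 + γ)/2`, `b = (1 - γ)/2` and `s = √((1 - u)² + T u)`. Using `s² = (1 - u)² + T u`,
`(a (1 + u) + b s)² - ((1 + γ u)² - γ T u) = a (4 b u² + T u) - a b (1 + u - s)²`,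
and `1 - u ≤ s ≤ 1 + 3u` for `0 ≤ T ≤ 8`, so `(1 + u - s)² ≤ 4u²` and the right-hand side is
nonnegative. Hence `√((1 + γ u)² - γ T u) ≤ a (1 + u) + b s`; divide by `s`.
-/

lemma sq_one_add_sub_sqrt_le {T u : ℝ} (hT₀ : 0 ≤ T) (hT₈ : T ≤ 8) (hu : 0 ≤ u) :
    (1 + u - √((1 - u) ^ 2 + T * u)) ^ 2 ≤ (2 * u) ^ 2 := by
  have h_lower : 1 - u ≤ √((1 - u) ^ 2 + T * u) :=
    (le_abs_self _).trans (Real.abs_le_sqrt (by nlinarith))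
  have h_upper : √((1 - u) ^ 2 + T * u) ≤ 1 + 3 * u :=
    (Real.sqrt_le_left (by linarith)).mpr (by nlinarith)
  exact sq_le_sq' (by linarith) (by linarith)

lemma sqrt_le_convex_combination {T γ u : ℝ} (hT₀ : 0 ≤ T) (hT₈ : T ≤ 8)
    (hγ₁ : -1 ≤ γ) (hγ₂ : γ ≤ 1) (hu : 0 ≤ u) :
    √((1 + γ * u) ^ 2 - γ * T * u) ≤
      (1 + γ) / 2 * (1 + u) + (1 - γ) / 2 * √((1 - u) ^ 2 + T * u) := by
  set s := √((1 - u) ^ 2 + T * u)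
  have hs_sq : s ^ 2 = (1 - u) ^ 2 + T * u := Real.sq_sqrt (by positivity)
  have ha : 0 ≤ (1 + γ) / 2 := by linarith
  have hb : 0 ≤ (1 - γ) / 2 := by linarith
  have h_gap : 0 ≤ (1 + γ) / 2 * (4 * ((1 - γ) / 2) * u ^ 2 + T * u
      - (1 - γ) / 2 * (1 + u - s) ^ 2) := by
    have h_sq : (1 - γ) / 2 * (1 + u - s) ^ 2 ≤ (1 - γ) / 2 * (2 * u) ^ 2 :=
      mul_le_mul_of_nonneg_left (sq_one_add_sub_sqrt_le hT₀ hT₈ hu) hb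
    exact mul_nonneg ha (by nlinarith [mul_nonneg hT₀ hu])
  refine Real.sqrt_le_iff.mpr ⟨by positivity, ?_⟩
  linear_combination h_gap - (1 - γ) / 2 * hs_sq

theorem stmt_4 (T γ u : ℝ) (hT : T ∈ Set.Ioo (0:ℝ) 4) (hγ : γ ∈ Set.Ioc (-1:ℝ) 1)
    (hu : u ∈ Set.Ioo (0:ℝ) 1) :
    Real.sqrt ((1 + γ*u)^2 - γ*T*u) / Real.sqrt ((1 - u)^2 + T*u) ≤
      (1 + γ)/2 * ((1 + u) / Real.sqrt ((1 - u)^2 + T*u)) + (1 - γ)/2 := by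
  obtain ⟨hT₀, hT₄⟩ := hT
  obtain ⟨hγ₁, hγ₂⟩ := hγ
  obtain ⟨hu₀, -⟩ := hu
  have hs : 0 < √((1 - u) ^ 2 + T * u) := Real.sqrt_pos.mpr (by positivity)
  calc √((1 + γ * u) ^ 2 - γ * T * u) / √((1 - u) ^ 2 + T * u)
      ≤ ((1 + γ) / 2 * (1 + u) + (1 - γ) / 2 * √((1 - u) ^ 2 + T * u))
          / √((1 - u) ^ 2 + T * u) := by
        gcongr
        exact sqrt_le_convex_combination hT₀.le (by linarith) hγ₁.le hγ₂ hu₀.le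
    _ = (1 + γ) / 2 * ((1 + u) / √((1 - u) ^ 2 + T * u)) + (1 - γ) / 2 := by
        field_simp
end

section
/- For every b ∈ (0,1), u ∈ (0,1), and T ∈ (0,4), the inequality (1/(1+b))·[ √((1−bu)² + bTu) − (1−bu) ] ≤ (1/2)·[ √((1−u)² + Tu) − (1−u) ] holds. -/
/-!
Rationalising, `√(c² + x) - c = x / (√(c² + x) + c)`, so with `A = √((1 - bu)² + bTu)` and
`B = √((1 - u)² + Tu)` the claim becomes `2b (B + 1 - u) ≤ (1 + b)(A + 1 - bu)`. This splits into
`2b (1 - u) ≤ (1 + b)(1 - bu)`, whose gap is `(1 - b)(1 + bu)`, and `2b B ≤ (1 + b) A`, which after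
squaring is a polynomial inequality whose gap is an explicit sum of nonnegative products.
-/

open Real

lemma sqrt_sq_add_sub_eq_div {c x : ℝ} (hc : 0 < c) (hx : 0 ≤ x) :
    √(c ^ 2 + x) - c = x / (√(c ^ 2 + x) + c) := by
  rw [eq_div_iff (by positivity)]
  ring_nf
  rw [sq_sqrt (by positivity)]
  ring

lemma two_mul_sqrt_le_one_add_mul_sqrt {b u T : ℝ} (hb0 : 0 < b) (hb1 : b < 1) (hu0 : 0 < u)
    (hu1 : u < 1) (hT : 0 < T) :
    2 * b * √((1 - u) ^ 2 + T * u) ≤ (1 + b) * √((1 - b * u) ^ 2 + b * T * u) := by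
  have gap : (1 + b) ^ 2 * ((1 - b * u) ^ 2 + b * T * u) - (2 * b) ^ 2 * ((1 - u) ^ 2 + T * u) =
      (1 - b) * (1 + b * u) * ((1 + b) * (1 - b * u) + 2 * b * (1 - u)) +
        b * T * u * (1 - b) ^ 2 := by ring
  have gap_nonneg : 0 ≤ (1 - b) * (1 + b * u) * ((1 + b) * (1 - b * u) + 2 * b * (1 - u)) +
      b * T * u * (1 - b) ^ 2 := by
    have hbu : 0 < 1 - b * u := by nlinarith
    have : 0 ≤ (1 + b) * (1 - b * u) + 2 * b * (1 - u) := by nlinarith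
    positivity
  rw [← pow_le_pow_iff_left₀ (by positivity) (by positivity) two_ne_zero, mul_pow (2 * b),
    mul_pow (1 + b), sq_sqrt (by positivity), sq_sqrt (by positivity)]
  linarith

theorem stmt_5 (b u T : ℝ) (hb : b ∈ Set.Ioo (0:ℝ) 1) (hu : u ∈ Set.Ioo (0:ℝ) 1)
    (hT : T ∈ Set.Ioo (0:ℝ) 4) :
    (1/(1 + b)) * (Real.sqrt ((1 - b*u)^2 + b*T*u) - (1 - b*u)) ≤
      (1/2) * (Real.sqrt ((1 - u)^2 + T*u) - (1 - u)) := by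
  obtain ⟨hb0, hb1⟩ := hb
  obtain ⟨hu0, hu1⟩ := hu
  have hT0 : 0 < T := hT.1
  have hbu : 0 < 1 - b * u := by nlinarith
  have hconst : 2 * b * (1 - u) ≤ (1 + b) * (1 - b * u) := by
    have : (1 + b) * (1 - b * u) - 2 * b * (1 - u) = (1 - b) * (1 + b * u) := by ring
    linarith [mul_pos (sub_pos.2 hb1) (by positivity : 0 < 1 + b * u)]
  have hden : 2 * b * (√((1 - u) ^ 2 + T * u) + (1 - u)) ≤
      (1 + b) * (√((1 - b * u) ^ 2 + b * T * u) + (1 - b * u)) := by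
    linarith [two_mul_sqrt_le_one_add_mul_sqrt hb0 hb1 hu0 hu1 hT0]
  rw [sqrt_sq_add_sub_eq_div hbu (by positivity),
    sqrt_sq_add_sub_eq_div (by linarith) (by positivity), one_div_mul_eq_div, one_div_mul_eq_div,
    div_div, div_div, div_le_div_iff₀ (by positivity) (by positivity)]
  linarith [mul_le_mul_of_nonneg_left hden (by positivity : 0 ≤ T * u)]
end

section
/- Let γ ∈ (−1,1] and S, T ∈ (0,4), and set a := T/S. With I(S,T) as defined below, one has I(S,T) ≤ ((1+γ)/2) · ∫₀^∞ (a + w)^{−(1+γ)/2} · (√(1+w) − 1)/(1+w) · w^{−(1−γ)/2} dw. -/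
/-!
The substitution `w = T u / (1 - u)²` maps `(0, 1)` onto `(0, ∞)` and turns the right-hand
side into `∫₀¹ (S / ((1-u)² + S u))^p · p u^(p-1) (1 + u) (√D - (1 - u)) / D du`, where
`p = (1+γ)/2` and `D = (1-u)² + T u`, so it suffices to compare integrands pointwise. The
bracket in `I` is `(X - N) / D` with `X = √(A D)`, `A = (1 + γu)² - γTu` and `N` the
numerator of the second fraction. Rationalizing both differences by
`X² - N² = p² u² T (4 - T)` and `D - (1-u)² = T u`, and removing the fractional power with
Bernoulli's inequality `u^(1-p) ≤ p + (1 - p) u`, leaves two polynomial inequalities.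
-/

open MeasureTheory Set Real

lemma sq_one_sub_add_mul_pos {T : ℝ} (hT0 : 0 < T) (hT4 : T < 4) (u : ℝ) :
    0 < (1 - u) ^ 2 + T * u := by
  nlinarith [sq_nonneg (1 - u - T / 2)]

lemma one_le_rpow_sub_one_mul {p u : ℝ} (hp0 : 0 ≤ p) (hp1 : p ≤ 1) (hu : 0 < u) :
    1 ≤ u ^ (p - 1) * (p + (1 - p) * u) := by
  have bernoulli : u ^ (1 - p) ≤ p + (1 - p) * u := by
    have := rpow_one_add_le_one_add_mul_self (s := u - 1) (by linarith)
      (by linarith : 0 ≤ 1 - p) (by linarith)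
    convert this using 1 <;> ring_nf
  calc 1 = u ^ (p - 1) * u ^ (1 - p) := by rw [← rpow_add hu]; norm_num
    _ ≤ u ^ (p - 1) * (p + (1 - p) * u) := by gcongr

lemma sub_le_mul_sub_of_sq_sub_sq {x y a b k : ℝ} (hxy : 0 < x + y) (hab : 0 < a + b)
    (h : (x ^ 2 - y ^ 2) * (a + b) ≤ k * (a ^ 2 - b ^ 2) * (x + y)) : x - y ≤ k * (a - b) := by
  refine le_of_mul_le_mul_right ?_ (mul_pos hxy hab)
  linear_combination h

lemma rpow_neg_mul_rpow_sub_one {a w : ℝ} (p : ℝ) (hw : 0 < w) (haw : 0 < a + w) :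
    (a + w) ^ (-p) * w ^ (p - 1) = (w / (a + w)) ^ p / w := by
  rw [div_rpow hw.le haw.le, rpow_neg haw.le, rpow_sub_one hw.ne']
  ring

section Pointwise

variable {γ T u : ℝ}

-- The weight `(1 + γ) u ((1 + γ) + (1 - γ) u)` is `4 p u (p + (1 - p) u)` with `p = (1 + γ)/2`:
-- `p u` times the Bernoulli bound for `u^(1-p)`.
lemma weight_le (hγ1 : -1 ≤ γ) (hγ2 : γ ≤ 1) (hu0 : 0 ≤ u) (hu1 : u ≤ 1) :
    (1 + γ) * u * ((1 + γ) + (1 - γ) * u) ≤ (1 + u) * (1 + γ * u) := by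
  have factor : (1 + u) * (1 + γ * u) - (1 + γ) * u * ((1 + γ) + (1 - γ) * u)
      = (1 - u) * (1 - (γ ^ 2 + γ - 1) * u) := by ring
  have : 0 ≤ 1 - (γ ^ 2 + γ - 1) * u := by
    nlinarith [mul_nonneg (sub_nonneg.2 hγ2) (by linarith : 0 ≤ γ + 2)]
  rw [← sub_nonneg, factor]
  exact mul_nonneg (by linarith) this

lemma weight_mul_le_sqrt (hγ1 : -1 ≤ γ) (hγ2 : γ ≤ 1) (hT0 : 0 ≤ T) (hT4 : T ≤ 4)
    (hu0 : 0 ≤ u) (hu1 : u ≤ 1) :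
    (1 + γ) * u * ((1 + γ) + (1 - γ) * u) * (4 - T)
      ≤ 4 * (1 + u) * √((1 + γ * u) ^ 2 - γ * T * u) := by
  have hw := weight_le hγ1 hγ2 hu0 hu1
  have h4 : (1 + γ * u) * (4 - T) ≤ 4 * √((1 + γ * u) ^ 2 - γ * T * u) := by
    have hsq : ((1 + γ * u) * (4 - T) / 4) ^ 2 ≤ (1 + γ * u) ^ 2 - γ * T * u := by
      nlinarith [mul_nonneg hT0 (sq_nonneg (1 - γ * u)),
        mul_nonneg hT0 (mul_nonneg (sq_nonneg (1 + γ * u)) (sub_nonneg.2 hT4))]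
    linarith [le_sqrt_of_sq_le hsq]
  calc (1 + γ) * u * ((1 + γ) + (1 - γ) * u) * (4 - T)
      ≤ (1 + u) * (1 + γ * u) * (4 - T) := by gcongr
    _ ≤ 4 * (1 + u) * √((1 + γ * u) ^ 2 - γ * T * u) := by nlinarith

lemma weight_mul_le_numerator (hγ1 : -1 ≤ γ) (hγ2 : γ ≤ 1) (hT0 : 0 ≤ T) (hT4 : T ≤ 4)
    (hu0 : 0 ≤ u) (hu1 : u ≤ 1) :
    (1 + γ) * u * ((1 + γ) + (1 - γ) * u) * (4 - T) * (1 - u)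
      ≤ 4 * (1 + u) * (1 - γ * u ^ 2 - (1 - γ) * (1 - T / 2) * u) := by
  have hw := weight_le hγ1 hγ2 hu0 hu1
  have hγu : 0 ≤ 1 + γ * u := by nlinarith
  calc (1 + γ) * u * ((1 + γ) + (1 - γ) * u) * (4 - T) * (1 - u)
      ≤ (1 + u) * (1 + γ * u) * (4 - T) * (1 - u) := by gcongr
    _ ≤ 4 * (1 + u) * (1 - γ * u ^ 2 - (1 - γ) * (1 - T / 2) * u) := by
      nlinarith [mul_nonneg (mul_nonneg hT0 hu0) (sub_nonneg.2 hγ2),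
        mul_nonneg (mul_nonneg hT0 hγu) (sub_nonneg.2 hu1)]

lemma weight_mul_sqrt_add_le (hγ1 : -1 ≤ γ) (hγ2 : γ ≤ 1) (hT0 : 0 ≤ T) (hT4 : T ≤ 4)
    (hu0 : 0 ≤ u) (hu1 : u ≤ 1) :
    (1 + γ) / 2 * u * ((1 + γ) / 2 + (1 - (1 + γ) / 2) * u) * (4 - T)
        * (√((1 - u) ^ 2 + T * u) + (1 - u))
      ≤ (1 + u) * (√((1 + γ * u) ^ 2 - γ * T * u) * √((1 - u) ^ 2 + T * u)
        + (1 - γ * u ^ 2 - (1 - γ) * (1 - T / 2) * u)) := by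
  have h1 := mul_le_mul_of_nonneg_right (weight_mul_le_sqrt hγ1 hγ2 hT0 hT4 hu0 hu1)
    (sqrt_nonneg ((1 - u) ^ 2 + T * u))
  have h2 := weight_mul_le_numerator hγ1 hγ2 hT0 hT4 hu0 hu1
  linear_combination (h1 + h2) / 4

lemma sqrt_div_sqrt_sub_div_le (hγ1 : -1 < γ) (hγ2 : γ ≤ 1) (hT0 : 0 < T) (hT4 : T < 4)
    (hu0 : 0 < u) (hu1 : u < 1) :
    √((1 + γ * u) ^ 2 - γ * T * u) / √((1 - u) ^ 2 + T * u)
        - (1 - γ * u ^ 2 - (1 - γ) * (1 - T / 2) * u) / ((1 - u) ^ 2 + T * u)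
      ≤ (1 + γ) / 2 * u ^ ((1 + γ) / 2 - 1)
          * ((1 + u) * (√((1 - u) ^ 2 + T * u) - (1 - u)) / ((1 - u) ^ 2 + T * u)) := by
  have hD : 0 < (1 - u) ^ 2 + T * u := sq_one_sub_add_mul_pos hT0 hT4 u
  have hN : 0 < 1 - γ * u ^ 2 - (1 - γ) * (1 - T / 2) * u := by
    have hγu : 0 < 1 + γ * u := by nlinarith
    nlinarith [mul_pos hγu (sub_pos.2 hu1),
      mul_nonneg (mul_nonneg (sub_nonneg.2 hγ2) hT0.le) hu0.le]
  have hdisc : ((1 + γ * u) ^ 2 - γ * T * u) * ((1 - u) ^ 2 + T * u)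
      - (1 - γ * u ^ 2 - (1 - γ) * (1 - T / 2) * u) ^ 2
      = ((1 + γ) / 2) ^ 2 * u ^ 2 * T * (4 - T) := by ring
  set A := (1 + γ * u) ^ 2 - γ * T * u
  set D := (1 - u) ^ 2 + T * u
  set N := 1 - γ * u ^ 2 - (1 - γ) * (1 - T / 2) * u
  set z := u ^ ((1 + γ) / 2 - 1)
  have hA : 0 ≤ A := by
    refine nonneg_of_mul_nonneg_left ?_ hD
    nlinarith [mul_pos (mul_pos (pow_pos hu0 2) hT0) (sub_pos.2 hT4)]
  set X := √A * √D
  have hX : X ^ 2 = A * D := by rw [mul_pow, sq_sqrt hA, sq_sqrt hD.le]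
  have hsqrtD : √D ^ 2 - (1 - u) ^ 2 = T * u := by rw [sq_sqrt hD.le]; ring
  have hz : 1 ≤ z * ((1 + γ) / 2 + (1 - (1 + γ) / 2) * u) :=
    one_le_rpow_sub_one_mul (by linarith) (by linarith) hu0
  have hweight := weight_mul_sqrt_add_le hγ1.le hγ2 hT0.le hT4.le hu0.le hu1.le
  have hsqrt_div : √A / √D = X / D := by
    rw [div_eq_div_iff (sqrt_pos.2 hD).ne' hD.ne', mul_assoc, mul_self_sqrt hD.le]
  rw [hsqrt_div, ← sub_div, show (1 + γ) / 2 * z * ((1 + u) * (√D - (1 - u)) / D)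
    = (1 + γ) / 2 * z * (1 + u) * (√D - (1 - u)) / D by ring]
  gcongr
  refine sub_le_mul_sub_of_sq_sub_sq (by positivity) (by linarith [sqrt_nonneg D]) ?_
  rw [hX, hdisc, hsqrtD]
  have hp : 0 < (1 + γ) / 2 := by linarith
  have hz0 : 0 ≤ z := by positivity
  have hc : 0 ≤ ((1 + γ) / 2) ^ 2 * u ^ 2 * T * (4 - T) * (√D + (1 - u)) := by
    have := sub_pos.2 hT4
    have := sqrt_nonneg D
    positivity
  linear_combination mul_le_mul_of_nonneg_left hz hc
    + mul_le_mul_of_nonneg_left hweight (by positivity : 0 ≤ (1 + γ) / 2 * T * u * z)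

end Pointwise

section ChangeOfVariables

lemma hasDerivAt_mul_div_one_sub_sq (T : ℝ) {u : ℝ} (hu : u ≠ 1) :
    HasDerivAt (fun x => T * x / (1 - x) ^ 2) (T * (1 + u) / (1 - u) ^ 3) u := by
  have hu' : (1 : ℝ) - u ≠ 0 := sub_ne_zero.2 hu.symm
  refine (((hasDerivAt_id' u).const_mul T).fun_div (((hasDerivAt_id' u).const_sub 1).fun_pow 2)
    (pow_ne_zero 2 hu')).congr_deriv ?_
  field_simp
  ring

variable {T : ℝ}

lemma injOn_mul_div_one_sub_sq (hT : 0 < T) :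
    InjOn (fun x => T * x / (1 - x) ^ 2) (Ioo 0 1) := by
  rintro x ⟨hx0, hx1⟩ y ⟨hy0, hy1⟩ h
  have hx : (1 - x) ^ 2 ≠ 0 := by positivity
  have hy : (1 - y) ^ 2 ≠ 0 := by positivity
  field_simp at h
  have : (x - y) * (1 - x * y) = 0 := by nlinarith
  rcases mul_eq_zero.1 this with h | h
  · linarith
  · nlinarith

lemma image_mul_div_one_sub_sq_Ioo (hT : 0 < T) :
    (fun x => T * x / (1 - x) ^ 2) '' Ioo 0 1 = Ioi 0 := by
  refine Subset.antisymm ?_ fun w (hw : 0 < w) => ?_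
  · rintro _ ⟨x, ⟨hx0, hx1⟩, rfl⟩
    have : 0 < 1 - x := by linarith
    exact mem_Ioi.2 (by positivity)
  · -- the smaller root of `w (1 - x)² = T x`
    set s := √(T * (T + 4 * w))
    have hs : 0 ≤ s := sqrt_nonneg _
    have hs2 : s ^ 2 = T * (T + 4 * w) := sq_sqrt (by positivity)
    refine ⟨2 * w / (2 * w + T + s), ⟨by positivity, ?_⟩, ?_⟩
    · rw [div_lt_one (by positivity)]
      linarith
    · have : (1 : ℝ) - 2 * w / (2 * w + T + s) = (T + s) / (2 * w + T + s) := by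
        field_simp
        ring
      simp only [this]
      field_simp
      linear_combination -hs2

lemma integral_Ioi_eq_integral_Ioo_mul_div_one_sub_sq (hT : 0 < T) (g : ℝ → ℝ) :
    ∫ w in Ioi 0, g w
      = ∫ u in Ioo 0 1, T * (1 + u) / (1 - u) ^ 3 * g (T * u / (1 - u) ^ 2) := by
  rw [← image_mul_div_one_sub_sq_Ioo hT,
    integral_image_eq_integral_abs_deriv_smul measurableSet_Ioo
      (fun u hu => (hasDerivAt_mul_div_one_sub_sq T hu.2.ne).hasDerivWithinAt)
      (injOn_mul_div_one_sub_sq hT)]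
  refine setIntegral_congr_fun measurableSet_Ioo fun u ⟨hu0, hu1⟩ => ?_
  have : 0 < 1 - u := by linarith
  rw [smul_eq_mul, abs_of_pos (by positivity)]

lemma mul_div_one_sub_sq_substitution {S u : ℝ} (p : ℝ) (hS : 0 < S) (hT : 0 < T)
    (hu0 : 0 < u) (hu1 : u < 1) :
    T * (1 + u) / (1 - u) ^ 3 * ((T / S + T * u / (1 - u) ^ 2) ^ (-p)
        * ((√(1 + T * u / (1 - u) ^ 2) - 1) / (1 + T * u / (1 - u) ^ 2))
        * (T * u / (1 - u) ^ 2) ^ (p - 1))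
      = u ^ (p - 1) * ((S / ((1 - u) ^ 2 + S * u)) ^ p
          * ((1 + u) * (√((1 - u) ^ 2 + T * u) - (1 - u)) / ((1 - u) ^ 2 + T * u))) := by
  have hv : 0 < 1 - u := by linarith
  set w := T * u / (1 - u) ^ 2 with hw_def
  have hw : 0 < w := by positivity
  have hratio : w / (T / S + w) = S / ((1 - u) ^ 2 + S * u) * u := by
    rw [hw_def]
    field_simp
  have hw1 : 1 + w = ((1 - u) ^ 2 + T * u) / (1 - u) ^ 2 := by
    rw [hw_def]
    field_simp
  have hsqrt : √(1 + w) = √((1 - u) ^ 2 + T * u) / (1 - u) := by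
    rw [hw1, sqrt_div' _ (sq_nonneg _), sqrt_sq hv.le]
  calc _ = T * (1 + u) / (1 - u) ^ 3 * ((√(1 + w) - 1) / (1 + w))
        * ((T / S + w) ^ (-p) * w ^ (p - 1)) := by ring
    _ = _ := by
      rw [rpow_neg_mul_rpow_sub_one p hw (by positivity), hratio, mul_rpow (by positivity) hu0.le,
        rpow_sub_one hu0.ne', hsqrt, hw1, hw_def]
      field_simp

end ChangeOfVariables

section Integrands

variable {γ S T : ℝ}

noncomputable def integrand (γ S T u : ℝ) : ℝ :=
  (S / ((1 - u) ^ 2 + S * u)) ^ ((1 + γ) / 2) *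
    (√((1 + γ * u) ^ 2 - γ * T * u) / √((1 - u) ^ 2 + T * u)
      - (1 - γ * u ^ 2 - (1 - γ) * (1 - T / 2) * u) / ((1 - u) ^ 2 + T * u))

noncomputable def majorant (γ S T u : ℝ) : ℝ :=
  u ^ ((1 + γ) / 2 - 1) * ((1 + γ) / 2 * ((S / ((1 - u) ^ 2 + S * u)) ^ ((1 + γ) / 2)
    * ((1 + u) * (√((1 - u) ^ 2 + T * u) - (1 - u)) / ((1 - u) ^ 2 + T * u))))

lemma continuous_integrand (hγ : -1 ≤ γ) (hS0 : 0 < S) (hS4 : S < 4) (hT0 : 0 < T)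
    (hT4 : T < 4) : Continuous (integrand γ S T) := by
  have hDS := sq_one_sub_add_mul_pos hS0 hS4
  have hD := sq_one_sub_add_mul_pos hT0 hT4
  have hp : 0 ≤ (1 + γ) / 2 := by linarith
  unfold integrand
  fun_prop (disch := first
    | exact fun u => (hD u).ne' | exact fun u => (hDS u).ne'
    | exact fun u => (sqrt_pos.2 (hD u)).ne' | exact fun _ => Or.inr hp)

lemma integrableOn_majorant (hγ : -1 < γ) (hS0 : 0 < S) (hS4 : S < 4) (hT0 : 0 < T)
    (hT4 : T < 4) : IntegrableOn (majorant γ S T) (Ioo 0 1) := by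
  have hDS := sq_one_sub_add_mul_pos hS0 hS4
  have hD := sq_one_sub_add_mul_pos hT0 hT4
  have hp : 0 ≤ (1 + γ) / 2 := by linarith
  have hcont : Continuous fun u : ℝ =>
      (1 + γ) / 2 * ((S / ((1 - u) ^ 2 + S * u)) ^ ((1 + γ) / 2)
        * ((1 + u) * (√((1 - u) ^ 2 + T * u) - (1 - u)) / ((1 - u) ^ 2 + T * u))) := by
    fun_prop (disch := first
      | exact fun u => (hD u).ne' | exact fun u => (hDS u).ne' | exact fun _ => Or.inr hp)
  exact ((intervalIntegral.integrableOn_Ioo_rpow_iff zero_lt_one).2 (by linarith)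
    ).mul_continuousOn_of_subset hcont.continuousOn measurableSet_Ioo isCompact_Icc
      Ioo_subset_Icc_self

lemma integrand_le_majorant (hγ1 : -1 < γ) (hγ2 : γ ≤ 1) (hS0 : 0 < S) (hT0 : 0 < T)
    (hT4 : T < 4) {u : ℝ} (hu0 : 0 < u) (hu1 : u < 1) :
    integrand γ S T u ≤ majorant γ S T u := by
  have hv : 0 < 1 - u := by linarith
  calc integrand γ S T u
      ≤ (S / ((1 - u) ^ 2 + S * u)) ^ ((1 + γ) / 2) * ((1 + γ) / 2 * u ^ ((1 + γ) / 2 - 1)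
          * ((1 + u) * (√((1 - u) ^ 2 + T * u) - (1 - u)) / ((1 - u) ^ 2 + T * u))) := by
        unfold integrand
        gcongr
        exact sqrt_div_sqrt_sub_div_le hγ1 hγ2 hT0 hT4 hu0 hu1
    _ = majorant γ S T u := by unfold majorant; ring

end Integrands

theorem stmt_7 (γ : ℝ) (hγ : γ ∈ Set.Ioc (-1:ℝ) 1)
    (I : ℝ → ℝ → ℝ)
    (hI : ∀ S T : ℝ, I S T =
      ∫ u in (0:ℝ)..1,
        (S/((1 - u)^2 + S*u)) ^ ((1 + γ)/2) *
          (Real.sqrt ((1 + γ*u)^2 - γ*T*u) / Real.sqrt ((1 - u)^2 + T*u)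
            - (1 - γ*u^2 - (1 - γ)*(1 - T/2)*u)/((1 - u)^2 + T*u)))
    (S T : ℝ) (hS : S ∈ Set.Ioo (0:ℝ) 4) (hT : T ∈ Set.Ioo (0:ℝ) 4)
    (a : ℝ) (ha : a = T/S) :
    I S T ≤
      (1 + γ)/2 * ∫ w in Set.Ioi (0:ℝ),
        (a + w) ^ (-(1 + γ)/2) * ((Real.sqrt (1 + w) - 1)/(1 + w)) * w ^ (-(1 - γ)/2) := by
  obtain ⟨hγ1, hγ2⟩ := hγ
  obtain ⟨hS0, hS4⟩ := hS
  obtain ⟨hT0, hT4⟩ := hT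
  rw [hI, intervalIntegral.integral_of_le zero_le_one, integral_Ioc_eq_integral_Ioo,
    integral_Ioi_eq_integral_Ioo_mul_div_one_sub_sq hT0, ← integral_const_mul, ha,
    show -(1 - γ) / 2 = (1 + γ) / 2 - 1 by ring, neg_div]
  have hf : IntegrableOn (integrand γ S T) (Ioo 0 1) :=
    (continuous_integrand hγ1.le hS0 hS4 hT0 hT4).integrableOn_Icc.mono_set Ioo_subset_Icc_self
  refine (setIntegral_mono_on hf (integrableOn_majorant hγ1 hS0 hS4 hT0 hT4) measurableSet_Ioo
    fun u hu => integrand_le_majorant hγ1 hγ2 hS0 hT0 hT4 hu.1 hu.2).trans_eq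
    (setIntegral_congr_fun measurableSet_Ioo fun u ⟨hu0, hu1⟩ => ?_)
  rw [majorant, mul_div_one_sub_sq_substitution _ hS0 hT0 hu0 hu1]
  ring
end

section
/- The function G₁(a) := ∫₀^∞ [ 1/(a+w) + 1/(1/a + w) ] · (√(1+w) − 1)/(1+w) dw is increasing on the interval (0,1). -/
/-!
Both `1/(a+w) + 1/(1/a+w)` and hence `G₁` depend on `a` only through `s = a + a⁻¹`, which
decreases on `(0, 1)`; so it suffices that the integral is strictly decreasing in `s`. For `s < t`
the difference of the integrands is `(t - s) (w² - 1) k(w) / (Q_s(w) Q_t(w))` with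
`Q_s(w) = w² + s w + 1` and `k(w) = (√(1+w) - 1)/(1+w)`. Folding `(0, 1)` onto `(1, ∞)` by
`w ↦ w⁻¹` (under which `Q_s(w⁻¹) = w⁻⁴ Q_s(w)`), the integral becomes that of
`(t - s) (w² - 1) (k(w) - k(w⁻¹)) / (Q_s(w) Q_t(w))` over `(1, ∞)`, which is positive since
`k(w⁻¹) < k(w)` for `w > 1`.
-/

open Set MeasureTheory Real

section Inversion

variable {E : Type*} [NormedAddCommGroup E] [NormedSpace ℝ E]

lemma image_inv_Ioi_one : (·⁻¹) '' Ioi (1 : ℝ) = Ioo 0 1 := by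
  rw [image_inv_eq_inv, inv_Ioi₀ one_pos, inv_one]

lemma hasDerivWithinAt_inv_Ioi_one {x : ℝ} (hx : x ∈ Ioi (1 : ℝ)) :
    HasDerivWithinAt (·⁻¹) (-(x ^ 2)⁻¹) (Ioi 1) x :=
  (hasDerivAt_inv (zero_lt_one.trans hx).ne').hasDerivWithinAt

lemma integrableOn_Ioi_one_inv_sq_smul_comp_inv {φ : ℝ → E} (hφ : IntegrableOn φ (Ioo 0 1)) :
    IntegrableOn (fun w ↦ (w ^ 2)⁻¹ • φ w⁻¹) (Ioi 1) := by
  have h := (integrableOn_image_iff_integrableOn_abs_deriv_smul measurableSet_Ioi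
    (fun _ ↦ hasDerivWithinAt_inv_Ioi_one) inv_injective.injOn φ).mp (image_inv_Ioi_one ▸ hφ)
  simpa only [abs_neg, abs_inv, abs_sq] using h

lemma setIntegral_Ioo_zero_one_eq_setIntegral_Ioi_one (φ : ℝ → E) :
    ∫ w in Ioo 0 1, φ w = ∫ w in Ioi 1, (w ^ 2)⁻¹ • φ w⁻¹ := by
  rw [← image_inv_Ioi_one, integral_image_eq_integral_abs_deriv_smul measurableSet_Ioi
    (fun _ ↦ hasDerivWithinAt_inv_Ioi_one) inv_injective.injOn]
  simp only [abs_neg, abs_inv, abs_sq]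

lemma setIntegral_Ioi_zero_eq_setIntegral_Ioi_one_add_inv {φ : ℝ → E}
    (hφ : IntegrableOn φ (Ioi 0)) :
    ∫ w in Ioi 0, φ w = ∫ w in Ioi 1, (φ w + (w ^ 2)⁻¹ • φ w⁻¹) := by
  have hone := hφ.mono_set (Ioi_subset_Ioi zero_le_one)
  rw [← Ioc_union_Ioi_eq_Ioi zero_le_one, setIntegral_union (Ioc_disjoint_Ioi le_rfl)
    measurableSet_Ioi (hφ.mono_set Ioc_subset_Ioi_self) hone, integral_Ioc_eq_integral_Ioo,
    setIntegral_Ioo_zero_one_eq_setIntegral_Ioi_one, integral_add hone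
    (integrableOn_Ioi_one_inv_sq_smul_comp_inv (hφ.mono_set Ioo_subset_Ioi_self)), add_comm]

end Inversion

lemma setIntegral_Ioi_zero_pos_of_add_inv_pos {φ : ℝ → ℝ} (hφ : IntegrableOn φ (Ioi 0))
    (hpos : ∀ w, 1 < w → 0 < φ w + (w ^ 2)⁻¹ * φ w⁻¹) : 0 < ∫ w in Ioi 0, φ w := by
  have hint : IntegrableOn (fun w ↦ φ w + (w ^ 2)⁻¹ * φ w⁻¹) (Ioi 1) :=
    (hφ.mono_set (Ioi_subset_Ioi zero_le_one)).add
      (integrableOn_Ioi_one_inv_sq_smul_comp_inv (hφ.mono_set Ioo_subset_Ioi_self))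
  rw [setIntegral_Ioi_zero_eq_setIntegral_Ioi_one_add_inv hφ]
  simp only [smul_eq_mul]
  refine (setIntegral_pos_iff_support_of_nonneg_ae ?_ hint).mpr ?_
  · filter_upwards [ae_restrict_mem measurableSet_Ioi] with w hw using (hpos w hw).le
  · have hsupp : Ioi 1 ⊆ Function.support (fun w ↦ φ w + (w ^ 2)⁻¹ * φ w⁻¹) :=
      fun w hw ↦ (hpos w hw).ne'
    rw [inter_eq_self_of_subset_right hsupp, volume_Ioi]
    exact ENNReal.zero_lt_top

noncomputable def sqrtWeight (w : ℝ) : ℝ := (√(1 + w) - 1) / (1 + w)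

lemma sqrtWeight_nonneg {w : ℝ} (hw : 0 ≤ w) : 0 ≤ sqrtWeight w :=
  div_nonneg (sub_nonneg.mpr (one_le_sqrt.mpr (by linarith))) (by linarith)

lemma sqrtWeight_le {w : ℝ} (hw : 0 ≤ w) : sqrtWeight w ≤ w * (1 + w) ^ (-(3 / 2) : ℝ) := by
  set t := √(1 + w) with ht
  have ht2 : t ^ 2 = 1 + w := sq_sqrt (by linarith)
  have ht1 : 1 ≤ t := one_le_sqrt.mpr (by linarith)
  have hpow : (1 + w) ^ (-(3 / 2) : ℝ) = (t ^ 3)⁻¹ := by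
    rw [rpow_neg (by linarith), show (3 / 2 : ℝ) = 1 / 2 * 3 by norm_num,
      rpow_mul (by linarith), ← sqrt_eq_rpow, rpow_ofNat]
  rw [sqrtWeight, hpow, ← ht, ← ht2, div_le_iff₀ (by positivity)]
  field_simp
  nlinarith

/-- With `s = √w` and `t = √(1 + w)` the claim reduces to `t < 1 + s`. -/
lemma sqrtWeight_inv_lt {w : ℝ} (hw : 1 < w) : sqrtWeight w⁻¹ < sqrtWeight w := by
  have hw0 : 0 < w := by linarith
  set s := √w
  set t := √(1 + w) with ht
  have hs2 : s ^ 2 = w := sq_sqrt hw0.le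
  have ht2 : t ^ 2 = 1 + w := sq_sqrt (by linarith)
  have hs1 : 1 < s := lt_sqrt zero_le_one |>.mpr (by simpa using hw)
  have ht0 : 0 < t := sqrt_pos.mpr (by linarith)
  have hts : t < 1 + s := by nlinarith
  have hsq : 1 + w⁻¹ = (t / s) ^ 2 := by rw [div_pow, ht2, hs2]; field_simp; ring
  rw [sqrtWeight, sqrtWeight, hsq, sqrt_sq (by positivity), ← ht, ← ht2,
    div_lt_div_iff₀ (by positivity) (by positivity)]
  field_simp
  nlinarith [mul_pos (sub_pos.mpr hs1) (sub_pos.mpr hts)]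

/-- The integrand of `G₁(a)` written in terms of `s = a + a⁻¹`, see `symKernel_add_inv`. -/
noncomputable def symKernel (s w : ℝ) : ℝ := (s + 2 * w) / (w ^ 2 + s * w + 1) * sqrtWeight w

noncomputable def symIntegral (s : ℝ) : ℝ := ∫ w in Ioi 0, symKernel s w

lemma symKernel_add_inv {a w : ℝ} (ha : 0 < a) (hw : 0 < w) :
    symKernel (a + a⁻¹) w = (1 / (a + w) + 1 / (1 / a + w)) * ((√(1 + w) - 1) / (1 + w)) := by
  rw [symKernel, sqrtWeight]
  congr 1
  field_simp
  ring

section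

variable {s : ℝ}

lemma symKernel_nonneg (hs : 0 ≤ s) {w : ℝ} (hw : 0 ≤ w) : 0 ≤ symKernel s w :=
  mul_nonneg (by positivity) (sqrtWeight_nonneg hw)

lemma symKernel_le (hs : 0 ≤ s) {w : ℝ} (hw : 0 < w) :
    symKernel s w ≤ 2 * (1 + w) ^ (-(3 / 2) : ℝ) := by
  have hfrac : (s + 2 * w) / (w ^ 2 + s * w + 1) ≤ 2 / w := by
    rw [div_le_div_iff₀ (by positivity) hw]
    nlinarith
  calc symKernel s w ≤ 2 / w * (w * (1 + w) ^ (-(3 / 2) : ℝ)) :=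
        mul_le_mul hfrac (sqrtWeight_le hw.le) (sqrtWeight_nonneg hw.le) (by positivity)
    _ = 2 * (1 + w) ^ (-(3 / 2) : ℝ) := by field_simp

lemma integrableOn_symKernel (hs : 0 ≤ s) : IntegrableOn (symKernel s) (Ioi 0) := by
  have hdom : Integrable (fun w : ℝ ↦ 2 * (1 + ‖w‖) ^ (-(3 / 2) : ℝ)) :=
    (integrable_one_add_norm (by norm_num)).const_mul 2
  have hmeas : Measurable (symKernel s) := by unfold symKernel sqrtWeight; fun_prop
  refine hdom.integrableOn.mono' hmeas.aestronglyMeasurable ?_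
  filter_upwards [ae_restrict_mem measurableSet_Ioi] with w (hw : 0 < w)
  rw [norm_of_nonneg (symKernel_nonneg hs hw.le), norm_of_nonneg hw.le]
  exact symKernel_le hs hw

end

lemma symKernel_sub_add_inv {s t w : ℝ} (hs : 0 ≤ s) (ht : 0 ≤ t) (hw : 0 < w) :
    symKernel s w - symKernel t w + (w ^ 2)⁻¹ * (symKernel s w⁻¹ - symKernel t w⁻¹) =
      (t - s) * (w ^ 2 - 1) * (sqrtWeight w - sqrtWeight w⁻¹) /
        ((w ^ 2 + s * w + 1) * (w ^ 2 + t * w + 1)) := by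
  simp only [symKernel]
  generalize sqrtWeight w = k
  generalize sqrtWeight w⁻¹ = k'
  field_simp
  ring

lemma symIntegral_strictAntiOn : StrictAntiOn symIntegral (Ici 0) := by
  intro s (hs : 0 ≤ s) t (ht : 0 ≤ t) hst
  have hpos := setIntegral_Ioi_zero_pos_of_add_inv_pos
    ((integrableOn_symKernel hs).sub (integrableOn_symKernel ht)) fun w hw ↦ by
      rw [Pi.sub_apply, Pi.sub_apply, symKernel_sub_add_inv hs ht (by linarith)]
      have hk := sub_pos.mpr (sqrtWeight_inv_lt hw)
      have hw2 : 0 < w ^ 2 - 1 := by nlinarith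
      exact div_pos (mul_pos (mul_pos (sub_pos.mpr hst) hw2) hk) (by positivity)
  rw [integral_sub' (integrableOn_symKernel hs) (integrableOn_symKernel ht)] at hpos
  exact sub_pos.mp hpos

lemma add_inv_strictAntiOn_Ioc : StrictAntiOn (fun a : ℝ ↦ a + a⁻¹) (Ioc 0 1) := by
  intro a ⟨ha0, _⟩ b ⟨hb0, hb1⟩ hab
  have hdiff : a + a⁻¹ - (b + b⁻¹) = (b - a) * (1 - a * b) / (a * b) := by
    field_simp; ring
  have hpos : 0 < (b - a) * (1 - a * b) / (a * b) :=
    div_pos (mul_pos (by linarith) (by nlinarith)) (by positivity)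
  show b + b⁻¹ < a + a⁻¹
  linarith

theorem stmt_10 :
    StrictMonoOn (fun a : ℝ =>
      ∫ w in Set.Ioi (0:ℝ),
        (1/(a + w) + 1/(1/a + w)) * ((Real.sqrt (1 + w) - 1)/(1 + w)))
      (Set.Ioo (0:ℝ) 1) := by
  have hmaps : MapsTo (fun a : ℝ ↦ a + a⁻¹) (Ioo 0 1) (Ici 0) :=
    fun a ha ↦ (add_pos ha.1 (inv_pos.mpr ha.1)).le
  refine (symIntegral_strictAntiOn.comp (add_inv_strictAntiOn_Ioc.mono Ioo_subset_Ioc_self)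
    hmaps).congr fun a ha ↦ ?_
  exact setIntegral_congr_fun measurableSet_Ioi fun w hw ↦ symKernel_add_inv ha.1 hw
end

section
/- For every a ∈ (0,1), ∫₀^∞ [ 1/(a+w) + 1/(1/a + w) ] · (√(1+w) − 1)/(1+w) dw = 2·√(a/(1−a))·arctan(√((1−a)/a)) + (1/√(1−a))·log( (1 + √(1−a))/(1 − √(1−a)) ) − ((1+a)/(1−a))·log(1/a). -/
/-!
Write the integrand as `S w * (1 / √(1 + w) - 1 / (1 + w))` with
`S w = 1 / (a + w) + 1 / (1 / a + w)`. Both halves have elementary primitives: `S w / (1 + w)`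
splits into partial fractions (logarithms), and with `u = √(1 + w)` one has
`a + w = u ^ 2 - (1 - a)` and `1 / a + w = u ^ 2 + (1 - a) / a`, so `S w / √(1 + w)` integrates
to a logarithm plus an arctangent. Choosing the primitive to vanish at infinity, and using that
the integrand is nonnegative, the improper integral is minus the primitive at `0`.
-/

open Real Filter Topology MeasureTheory Set

lemma hasDerivAt_log_add_sub_log_add {p q x : ℝ} (hp : 0 < p + x) (hq : 0 < q + x) :
    HasDerivAt (fun y => log (p + y) - log (q + y)) ((q - p) / ((p + x) * (q + x))) x := by
  refine ((((hasDerivAt_id' x).const_add p).log hp.ne').sub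
    (((hasDerivAt_id' x).const_add q).log hq.ne')).congr_deriv ?_
  field_simp
  ring

lemma tendsto_log_add_sub_log_add_atTop (p q : ℝ) :
    Tendsto (fun x => log (p + x) - log (q + x)) atTop (𝓝 0) := by
  have h := (tendsto_log_comp_add_sub_log p).sub (tendsto_log_comp_add_sub_log q)
  simpa only [sub_self, sub_sub_sub_cancel_right, add_comm] using h

lemma hasDerivAt_arctan_const_div {d y : ℝ} (hy : y ≠ 0) :
    HasDerivAt (fun x => arctan (d / x)) (-d / (y ^ 2 + d ^ 2)) y := by
  refine ((hasDerivAt_inv hy).const_mul d).arctan.congr_deriv ?_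
  field_simp

lemma tendsto_arctan_const_div_atTop (d : ℝ) :
    Tendsto (fun x => arctan (d / x)) atTop (𝓝 0) := by
  simpa only [Function.comp_def, id_eq, arctan_zero] using
    (continuous_arctan.tendsto 0).comp (tendsto_const_nhds.div_atTop tendsto_id)

lemma tendsto_sqrt_one_add_atTop : Tendsto (fun w => √(1 + w)) atTop atTop :=
  tendsto_sqrt_atTop.comp (tendsto_atTop_add_const_left _ 1 tendsto_id)

lemma one_div_sqrt_sub_one_div {x : ℝ} (hx : 0 < x) : 1 / √x - 1 / x = (√x - 1) / x := by
  have := sqrt_pos.2 hx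
  field_simp
  linear_combination -sq_sqrt hx.le

noncomputable def ratPrimitive (a w : ℝ) : ℝ :=
  (log (1 + w) - log (a + w) + a * (log (1 / a + w) - log (1 + w))) / (1 - a)

noncomputable def sqrtPrimitive (a w : ℝ) : ℝ :=
  (log (-√(1 - a) + √(1 + w)) - log (√(1 - a) + √(1 + w))) / √(1 - a)
    - 2 * √(a / (1 - a)) * arctan (√((1 - a) / a) / √(1 + w))

section

variable {a w : ℝ}

lemma hasDerivAt_ratPrimitive (ha : a ∈ Ioo 0 1) (hw : -a < w) :
    HasDerivAt (ratPrimitive a) (-(1 / (a + w) + 1 / (1 / a + w)) / (1 + w)) w := by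
  obtain ⟨ha0, ha1⟩ := ha
  have h1a : 1 - a ≠ 0 := by linarith
  have : 1 < 1 / a := one_lt_one_div ha0 ha1
  refine (((hasDerivAt_log_add_sub_log_add (p := 1) (q := a) (by linarith) (by linarith)).add
    ((hasDerivAt_log_add_sub_log_add (p := 1 / a) (q := 1) (by linarith)
      (by linarith)).const_mul a)).div_const (1 - a)).congr_deriv ?_
  have : a + w ≠ 0 := by linarith
  have : 1 / a + w ≠ 0 := by linarith
  field_simp
  ring

lemma hasDerivAt_sqrtPrimitive (ha : a ∈ Ioo 0 1) (hw : -a < w) :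
    HasDerivAt (sqrtPrimitive a) ((1 / (a + w) + 1 / (1 / a + w)) / √(1 + w)) w := by
  obtain ⟨ha0, ha1⟩ := ha
  set s := √(1 + w)
  set b := √(1 - a)
  set c := √(a / (1 - a))
  set d := √((1 - a) / a)
  have hs2 : s ^ 2 = 1 + w := sq_sqrt (by linarith)
  have hb2 : b ^ 2 = 1 - a := sq_sqrt (by linarith)
  have hd2 : d ^ 2 = (1 - a) / a := sq_sqrt (div_nonneg (by linarith) ha0.le)
  have hcd : c * d = 1 := by
    rw [← sqrt_mul (div_nonneg ha0.le (by linarith)), div_mul_div_comm, mul_comm a,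
      div_self (by nlinarith), sqrt_one]
  have hb0 : 0 < b := sqrt_pos.2 (by linarith)
  have hbs : b < s := sqrt_lt_sqrt (by linarith) (by linarith)
  have hsq : HasDerivAt (fun w => √(1 + w)) (1 / (2 * s)) w := by
    simpa using ((hasDerivAt_id' w).const_add 1).sqrt (by linarith)
  have hlog := (hasDerivAt_log_add_sub_log_add (p := -b) (q := b) (x := s) (by linarith)
    (by linarith)).comp w hsq
  have harc := (hasDerivAt_arctan_const_div (d := d) (by linarith : s ≠ 0)).comp w hsq
  refine ((hlog.div_const b).sub (harc.const_mul (2 * c))).congr_deriv ?_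
  have h1 : (-b + s) * (b + s) = a + w := by linear_combination hs2 - hb2
  have h2 : s ^ 2 + d ^ 2 = 1 / a + w := by rw [hs2, hd2]; field_simp; ring
  rw [h1, h2, eq_inv_of_mul_eq_one_left hcd]
  have : a + w ≠ 0 := by linarith
  have : 1 / a + w ≠ 0 := by linarith [one_lt_one_div ha0 ha1]
  have : s ≠ 0 := by linarith
  have : d ≠ 0 := by rintro h; simp [h] at hcd
  field_simp
  ring

lemma hasDerivAt_ratPrimitive_add_sqrtPrimitive (ha : a ∈ Ioo 0 1) (hw : -a < w) :
    HasDerivAt (fun w => ratPrimitive a w + sqrtPrimitive a w)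
      ((1 / (a + w) + 1 / (1 / a + w)) * ((√(1 + w) - 1) / (1 + w))) w := by
  refine ((hasDerivAt_ratPrimitive ha hw).add (hasDerivAt_sqrtPrimitive ha hw)).congr_deriv ?_
  rw [← one_div_sqrt_sub_one_div (by linarith [ha.2] : 0 < 1 + w)]
  ring

lemma tendsto_ratPrimitive_atTop (a : ℝ) : Tendsto (ratPrimitive a) atTop (𝓝 0) := by
  have h := ((tendsto_log_add_sub_log_add_atTop 1 a).add
    ((tendsto_log_add_sub_log_add_atTop (1 / a) 1).const_mul a)).div_const (1 - a)
  rw [mul_zero, add_zero, zero_div] at h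
  exact h

lemma tendsto_sqrtPrimitive_atTop (a : ℝ) : Tendsto (sqrtPrimitive a) atTop (𝓝 0) := by
  have hlog := (tendsto_log_add_sub_log_add_atTop (-√(1 - a)) √(1 - a)).comp
    tendsto_sqrt_one_add_atTop
  have harc := (tendsto_arctan_const_div_atTop √((1 - a) / a)).comp tendsto_sqrt_one_add_atTop
  have h := (hlog.div_const √(1 - a)).sub (harc.const_mul (2 * √(a / (1 - a))))
  rw [zero_div, mul_zero, sub_zero] at h
  exact h

lemma ratPrimitive_zero (a : ℝ) : ratPrimitive a 0 = (1 + a) / (1 - a) * log (1 / a) := by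
  simp only [ratPrimitive, add_zero, log_one, one_div, log_inv]
  ring

lemma sqrtPrimitive_zero (ha : a ∈ Ioo 0 1) :
    sqrtPrimitive a 0 = -(2 * √(a / (1 - a)) * arctan (√((1 - a) / a))
      + 1 / √(1 - a) * log ((1 + √(1 - a)) / (1 - √(1 - a)))) := by
  have hb1 : √(1 - a) < 1 := by rw [sqrt_lt' one_pos]; linarith [ha.1]
  simp only [sqrtPrimitive, add_zero, sqrt_one, div_one, neg_add_eq_sub]
  rw [add_comm √(1 - a) 1, log_div (by positivity) (by linarith)]
  ring

lemma integrand_nonneg (ha : 0 < a) (hw : 0 ≤ w) :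
    0 ≤ (1 / (a + w) + 1 / (1 / a + w)) * ((√(1 + w) - 1) / (1 + w)) := by
  have : 1 ≤ √(1 + w) := by rw [one_le_sqrt]; linarith
  have : 0 ≤ √(1 + w) - 1 := by linarith
  positivity

end

theorem stmt_11 (a : ℝ) (ha : a ∈ Set.Ioo (0:ℝ) 1) :
    ∫ w in Set.Ioi (0:ℝ),
        (1/(a + w) + 1/(1/a + w)) * ((Real.sqrt (1 + w) - 1)/(1 + w)) =
      2 * Real.sqrt (a/(1 - a)) * Real.arctan (Real.sqrt ((1 - a)/a))
        + (1/Real.sqrt (1 - a)) * Real.log ((1 + Real.sqrt (1 - a))/(1 - Real.sqrt (1 - a)))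
        - ((1 + a)/(1 - a)) * Real.log (1/a) := by
  have hlim : Tendsto (fun w => ratPrimitive a w + sqrtPrimitive a w) atTop (𝓝 0) := by
    simpa only [add_zero] using (tendsto_ratPrimitive_atTop a).add (tendsto_sqrtPrimitive_atTop a)
  rw [integral_Ioi_of_hasDerivAt_of_nonneg'
    (fun w hw => hasDerivAt_ratPrimitive_add_sqrtPrimitive ha (by linarith [ha.1, mem_Ici.1 hw]))
    (fun w hw => integrand_nonneg ha.1 (le_of_lt hw)) hlim,
    ratPrimitive_zero, sqrtPrimitive_zero ha]
  ring
end

section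
/- The function G(b) := (2/b)·arctan(b) + (2·√(1+b²)/b)·log(b + √(1+b²)) − ((2+b²)/b²)·log(1+b²) is decreasing on (0,∞). -/
/-!
Write `s = √(1 + b²)`; the logarithm in the middle term is `arsinh b` by definition. A direct
computation gives `G' b = -2 K b / b³` with `K x = x arctan x + x arsinh x / s - 2 log (1 + x²)`.
Since `K 0 = 0`, it suffices that `K' x = arctan x + arsinh x / s³ - 2 x / s²` is positive for
`x > 0`. This follows from Shafer-type lower bounds `arctan x > 3x / (1 + 2s)` and
`arsinh x > 3x / (2 + s)`, after which `K' x` exceeds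
`x (s - 1)² (3s² + 8s + 3) / ((1 + 2s)(2 + s) s³) > 0`.
-/

open Real Set

theorem pos_of_hasDerivAt_pos {f f' : ℝ → ℝ} (hf : ∀ x, HasDerivAt f (f' x) x) (hf₀ : f 0 = 0)
    (hf' : ∀ x, 0 < x → 0 < f' x) {x : ℝ} (hx : 0 < x) : 0 < f x := by
  have hmono : StrictMonoOn f (Ici 0) :=
    strictMonoOn_of_hasDerivWithinAt_pos (convex_Ici 0)
      (fun y _ => (hf y).continuousAt.continuousWithinAt) (fun y _ => (hf y).hasDerivWithinAt)
      (fun y hy => hf' y (by rwa [interior_Ici] at hy))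
  simpa only [hf₀] using hmono self_mem_Ici hx.le hx

lemma one_lt_sqrt_one_add_sq {x : ℝ} (hx : 0 < x) : 1 < √(1 + x ^ 2) := by
  rw [lt_sqrt zero_le_one]
  nlinarith

lemma hasDerivAt_sqrt_one_add_sq (x : ℝ) :
    HasDerivAt (fun t => √(1 + t ^ 2)) (x / √(1 + x ^ 2)) x := by
  convert (((hasDerivAt_pow 2 x).const_add 1).sqrt (by positivity)) using 1
  field_simp
  ring

lemma div_lt_arctan {x : ℝ} (hx : 0 < x) : 3 * x / (1 + 2 * √(1 + x ^ 2)) < arctan x := by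
  suffices 0 < arctan x - 3 * x / (1 + 2 * √(1 + x ^ 2)) by linarith
  refine pos_of_hasDerivAt_pos (f := fun t => arctan t - 3 * t / (1 + 2 * √(1 + t ^ 2)))
    (f' := fun x =>
      (√(1 + x ^ 2) - 1) ^ 2 / (√(1 + x ^ 2) ^ 2 * (1 + 2 * √(1 + x ^ 2)) ^ 2))
    (fun y => ?_) (by simp) (fun y hy => ?_) hx
  · have hs := sq_sqrt (by positivity : (0 : ℝ) ≤ 1 + y ^ 2)
    have : 0 < √(1 + y ^ 2) := sqrt_pos.2 (by positivity)
    refine ((hasDerivAt_arctan y).sub (((hasDerivAt_id' y).const_mul 3).div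
      (((hasDerivAt_sqrt_one_add_sq y).const_mul 2).const_add 1) (by positivity))).congr_deriv ?_
    set s := √(1 + y ^ 2)
    field_simp
    rw [show y ^ 2 = s ^ 2 - 1 by linarith]
    ring
  · have := one_lt_sqrt_one_add_sq hy
    exact div_pos (pow_pos (by linarith) 2) (by positivity)

lemma div_lt_arsinh {x : ℝ} (hx : 0 < x) : 3 * x / (2 + √(1 + x ^ 2)) < arsinh x := by
  suffices 0 < arsinh x - 3 * x / (2 + √(1 + x ^ 2)) by linarith
  refine pos_of_hasDerivAt_pos (f := fun t => arsinh t - 3 * t / (2 + √(1 + t ^ 2)))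
    (f' := fun x => (√(1 + x ^ 2) - 1) ^ 2 / (√(1 + x ^ 2) * (2 + √(1 + x ^ 2)) ^ 2))
    (fun y => ?_) (by simp) (fun y hy => ?_) hx
  · have hs := sq_sqrt (by positivity : (0 : ℝ) ≤ 1 + y ^ 2)
    have : 0 < √(1 + y ^ 2) := sqrt_pos.2 (by positivity)
    refine ((hasDerivAt_arsinh y).sub (((hasDerivAt_id' y).const_mul 3).div
      ((hasDerivAt_sqrt_one_add_sq y).const_add 2) (by positivity))).congr_deriv ?_
    set s := √(1 + y ^ 2)
    field_simp
    rw [show y ^ 2 = s ^ 2 - 1 by linarith]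
    ring
  · have := one_lt_sqrt_one_add_sq hy
    exact div_pos (pow_pos (by linarith) 2) (by positivity)

noncomputable def K (x : ℝ) : ℝ :=
  x * arctan x + x * arsinh x / √(1 + x ^ 2) - 2 * log (1 + x ^ 2)

lemma hasDerivAt_K (x : ℝ) :
    HasDerivAt K (arctan x + arsinh x / √(1 + x ^ 2) ^ 3 - 2 * x / (1 + x ^ 2)) x := by
  have hs := sq_sqrt (by positivity : (0 : ℝ) ≤ 1 + x ^ 2)
  have : 0 < √(1 + x ^ 2) := sqrt_pos.2 (by positivity)
  refine ((((hasDerivAt_id' x).mul (hasDerivAt_arctan x)).add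
    (((hasDerivAt_id' x).mul (hasDerivAt_arsinh x)).div (hasDerivAt_sqrt_one_add_sq x)
      this.ne')).sub
    ((((hasDerivAt_pow 2 x).const_add 1).log (by positivity)).const_mul 2)).congr_deriv ?_
  set s := √(1 + x ^ 2)
  simp only [Pi.mul_apply, Nat.cast_ofNat]
  field_simp
  rw [show x ^ 2 = s ^ 2 - 1 by linarith]
  ring

lemma K_deriv_pos {x : ℝ} (hx : 0 < x) :
    0 < arctan x + arsinh x / √(1 + x ^ 2) ^ 3 - 2 * x / (1 + x ^ 2) := by
  have hs := sq_sqrt (by positivity : (0 : ℝ) ≤ 1 + x ^ 2)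
  have hA := div_lt_arctan hx
  have hL : 3 * x / (2 + √(1 + x ^ 2)) / √(1 + x ^ 2) ^ 3 < arsinh x / √(1 + x ^ 2) ^ 3 :=
    div_lt_div_of_pos_right (div_lt_arsinh hx) (by positivity)
  set s := √(1 + x ^ 2)
  have hs1 : 1 < s := one_lt_sqrt_one_add_sq hx
  have hsum : 3 * x / (1 + 2 * s) + 3 * x / (2 + s) / s ^ 3 - 2 * x / (1 + x ^ 2)
      = x * (s - 1) ^ 2 * (3 * s ^ 2 + 8 * s + 3) / ((1 + 2 * s) * (2 + s) * s ^ 3) := by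
    rw [← hs]
    field_simp
    ring
  have : 0 ≤ x * (s - 1) ^ 2 * (3 * s ^ 2 + 8 * s + 3) / ((1 + 2 * s) * (2 + s) * s ^ 3) := by
    have : 0 < s := by linarith
    positivity
  linarith

lemma K_pos {x : ℝ} (hx : 0 < x) : 0 < K x :=
  pos_of_hasDerivAt_pos hasDerivAt_K (by simp [K]) (fun _ => K_deriv_pos) hx

noncomputable def G (b : ℝ) : ℝ :=
  2 / b * arctan b + 2 * √(1 + b ^ 2) / b * arsinh b - (2 + b ^ 2) / b ^ 2 * log (1 + b ^ 2)

lemma hasDerivAt_G {b : ℝ} (hb : b ≠ 0) : HasDerivAt G (-2 * K b / b ^ 3) b := by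
  have hs := sq_sqrt (by positivity : (0 : ℝ) ≤ 1 + b ^ 2)
  have : 0 < √(1 + b ^ 2) := sqrt_pos.2 (by positivity)
  have hpow := hasDerivAt_pow 2 b
  refine (((((hasDerivAt_const b 2).div (hasDerivAt_id' b) hb).mul (hasDerivAt_arctan b)).add
    ((((hasDerivAt_sqrt_one_add_sq b).const_mul 2).div (hasDerivAt_id' b) hb).mul
      (hasDerivAt_arsinh b))).sub
    (((hpow.const_add 2).div hpow (pow_ne_zero 2 hb)).mul
      ((hpow.const_add 1).log (by positivity)))).congr_deriv ?_
  simp only [K, Pi.div_apply, Nat.cast_ofNat]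
  set s := √(1 + b ^ 2)
  field_simp
  rw [hs]
  ring

theorem stmt_15 :
    StrictAntiOn (fun b : ℝ =>
      (2/b) * Real.arctan b
        + (2 * Real.sqrt (1 + b^2) / b) * Real.log (b + Real.sqrt (1 + b^2))
        - ((2 + b^2)/b^2) * Real.log (1 + b^2)) (Set.Ioi (0:ℝ)) := by
  refine strictAntiOn_of_hasDerivWithinAt_neg (f := G) (convex_Ioi 0)
    (fun b hb => (hasDerivAt_G (ne_of_gt hb)).continuousAt.continuousWithinAt)
    (fun b hb => (hasDerivAt_G (ne_of_gt (interior_subset hb))).hasDerivWithinAt) fun b hb => ?_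
  rw [interior_Ioi] at hb
  exact div_neg_of_neg_of_pos (by linarith [K_pos hb]) (pow_pos hb 3)
end

section
/- For every c > 0, the quantity h(c) := 2c/(1+c) + (c/(1+c))^{3/2}·log(√c + √(1+c)) − 2·log(1+c) is negative. -/
/-!
Substituting `c = sinh² u` with `u > 0` gives `√c + √(1 + c) = sinh u + cosh u = exp u`,
`c / (1 + c) = tanh² u` and `1 + c = cosh² u`, so `h(c) = -G(u)` with
`G(u) = 4 log cosh u - 2 tanh² u - u tanh³ u`. Now `G(0) = 0` and
`G'(u) = 3 sinh² u (sinh u cosh u - u) / cosh⁴ u > 0` for `u > 0`, because `2u < sinh 2u`.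
-/

open Real

noncomputable def hyperbolicGap (u : ℝ) : ℝ :=
  4 * log (cosh u) - 2 * (sinh u ^ 2 / cosh u ^ 2) - u * sinh u ^ 3 / cosh u ^ 3

lemma hasDerivAt_hyperbolicGap (u : ℝ) :
    HasDerivAt hyperbolicGap (3 * sinh u ^ 2 * (sinh u * cosh u - u) / cosh u ^ 4) u := by
  have hcosh := hasDerivAt_cosh u
  have hsinh := hasDerivAt_sinh u
  have hcosh_ne : cosh u ≠ 0 := (cosh_pos u).ne'
  have := (((hcosh.log hcosh_ne).const_mul 4).sub
    (((hsinh.pow 2).div (hcosh.pow 2) (pow_ne_zero _ hcosh_ne)).const_mul 2)).sub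
    (((hasDerivAt_id u).mul (hsinh.pow 3)).div (hcosh.pow 3) (pow_ne_zero _ hcosh_ne))
  refine this.congr_deriv ?_
  simp only [Pi.pow_apply, Pi.mul_apply, id, Nat.cast_ofNat]
  field_simp
  linear_combination (-3 * u * sinh u ^ 2 * cosh u ^ 2) * cosh_sq' u

lemma self_lt_sinh_mul_cosh {x : ℝ} (hx : 0 < x) : x < sinh x * cosh x := by
  have h : 2 * x < sinh (2 * x) := self_lt_sinh_iff.mpr (by linarith)
  rw [sinh_two_mul] at h
  linarith

lemma strictMonoOn_hyperbolicGap : StrictMonoOn hyperbolicGap (Set.Ici 0) := by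
  refine strictMonoOn_of_deriv_pos (convex_Ici 0)
    (fun x _ => (hasDerivAt_hyperbolicGap x).continuousAt.continuousWithinAt) fun x hx => ?_
  rw [interior_Ici, Set.mem_Ioi] at hx
  rw [(hasDerivAt_hyperbolicGap x).deriv]
  have hsinh : 0 < sinh x := sinh_pos_iff.mpr hx
  have hgap : 0 < sinh x * cosh x - x := sub_pos.mpr (self_lt_sinh_mul_cosh hx)
  positivity

lemma hyperbolicGap_pos {u : ℝ} (hu : 0 < u) : 0 < hyperbolicGap u := by
  have h0 : hyperbolicGap 0 = 0 := by simp [hyperbolicGap]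
  simpa [h0] using strictMonoOn_hyperbolicGap Set.self_mem_Ici hu.le hu

lemma rpow_three_halves_of_sq {t : ℝ} (ht : 0 ≤ t) : (t ^ 2) ^ ((3 : ℝ) / 2) = t ^ 3 := by
  rw [← rpow_natCast t 2, ← rpow_mul ht]
  norm_num

lemma log_sinh_add_cosh (u : ℝ) : log (sinh u + cosh u) = u := by
  rw [sinh_add_cosh, log_exp]

theorem stmt_17 (c : ℝ) (hc : 0 < c) :
    2*c/(1 + c) + (c/(1 + c)) ^ ((3:ℝ)/2) * Real.log (Real.sqrt c + Real.sqrt (1 + c))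
      - 2 * Real.log (1 + c) < 0 := by
  set u := arsinh (√c)
  have hu : 0 < u := arsinh_pos_iff.mpr (sqrt_pos.mpr hc)
  have hsinh : 0 < sinh u := sinh_pos_iff.mpr hu
  have hc_eq : c = sinh u ^ 2 := by rw [sinh_arsinh, sq_sqrt hc.le]
  have hone_add : 1 + c = cosh u ^ 2 := by rw [hc_eq, cosh_sq']
  have hfrac : c / (1 + c) = (sinh u / cosh u) ^ 2 := by rw [hone_add, hc_eq, div_pow]
  have hpow : (c / (1 + c)) ^ ((3 : ℝ) / 2) = sinh u ^ 3 / cosh u ^ 3 := by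
    rw [hfrac, rpow_three_halves_of_sq (by positivity), div_pow]
  have hlog : log (√c + √(1 + c)) = u := by
    rw [hone_add, hc_eq, sqrt_sq hsinh.le, sqrt_sq (cosh_pos u).le, log_sinh_add_cosh]
  have hlog_one_add : log (1 + c) = 2 * log (cosh u) := by rw [hone_add, log_pow]; push_cast; ring
  have hgap := hyperbolicGap_pos hu
  rw [hyperbolicGap] at hgap
  rw [hpow, mul_div_assoc, hfrac, hlog, hlog_one_add, div_pow]
  linarith [show sinh u ^ 3 / cosh u ^ 3 * u = u * sinh u ^ 3 / cosh u ^ 3 by ring]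
end
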